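/- arXiv:hep-th/0402147 — 2 statements merged into one kernel-verified Lean document; each statement's English description precedes it below -/
import Mathlib

section
/- For Schwartz functions f, g on ℝⁿ and any real skew-symmetric n×n matrix Θ, the integral of the Moyal product equals the integral of the pointwise product: ∫ (f ⋆_Θ g)(x) dx = ∫ f(x) g(x) dx. -/
open MeasureTheory Complex

/-- The Moyal product of two functions on `ℝⁿ` (given by its oscillatory-integral
formula), for a real `n × n` matrix `Θ`. -/
noncomputable def moyal (n : ℕ) (Θ : Matrix (Fin n) (Fin n) ℝ)
    (f g : (Fin n → ℝ) → ℂ) : (Fin n → ℝ) → ℂ :=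
  fun x => (((2 * Real.pi) ^ n : ℝ) : ℂ)⁻¹ *
    ∫ ξ : Fin n → ℝ, ∫ y : Fin n → ℝ,
      Complex.exp (Complex.I * (∑ i, ξ i * (x i - y i))) *
        f (x - (1 / 2 : ℝ) • Θ.mulVec ξ) * g y

/-!
Integrating out `y` turns the Moyal integrand into `e^{iξ·x} f(x - ½Θξ) ĝ(ξ)`. After exchanging
the `x`- and `ξ`-integrals, the translation `x ↦ x + ½Θξ` contributes only the phase
`e^{iξ·½Θξ} = 1` (`Θ` is skew), so the `x`-integral is `f̌(ξ)`. Finally `∫ f̌ ĝ = (2π)ⁿ ∫ f g` is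
Parseval's identity, read off from the Fourier transform on `EuclideanSpace ℝ (Fin n)` after the
substitution `ξ = 2π w`.
-/

open scoped FourierTransform SchwartzMap
open Real

lemma dotProduct_mulVec_self_eq_zero_of_transpose_eq_neg {m R : Type*} [Fintype m] [CommRing R]
    [IsAddTorsionFree R] {A : Matrix m m R} (hA : A.transpose = -A) (v : m → R) :
    v ⬝ᵥ A.mulVec v = 0 := by
  refine self_eq_neg.mp ?_
  conv_lhs => rw [Matrix.dotProduct_mulVec, ← Matrix.mulVec_transpose, hA, dotProduct_comm]
  rw [Matrix.neg_mulVec, dotProduct_neg]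

section

variable {n : ℕ}

/-- The unnormalised Fourier transform with the sign convention of the Moyal formula:
`fourierDot g (-ξ)` is the `ĝ(ξ) = ∫ e^{-iξ·y} g(y) dy` that appears there. -/
noncomputable def fourierDot (f : (Fin n → ℝ) → ℂ) (ξ : Fin n → ℝ) : ℂ :=
  ∫ y, cexp (I * (ξ ⬝ᵥ y : ℝ)) * f y

lemma fourierDot_eq_fourierInv (f : (Fin n → ℝ) → ℂ) (ξ : Fin n → ℝ) :
    fourierDot f ξ =
      𝓕⁻ (fun v : EuclideanSpace ℝ (Fin n) => f v.ofLp) ((2 * π)⁻¹ • WithLp.toLp 2 ξ) := by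
  rw [Real.fourierInv_eq', fourierDot, ← (PiLp.volume_preserving_ofLp (Fin n)).integral_comp
    (MeasurableEquiv.toLp 2 (Fin n → ℝ)).symm.measurableEmbedding]
  congr 1 with v
  have h2π : 2 * π ≠ 0 := by positivity
  simp only [EuclideanSpace.inner_eq_star_dotProduct, WithLp.ofLp_smul,
    star_trivial, smul_dotProduct, smul_eq_mul, mul_inv_cancel_left₀ h2π, mul_comm I]

lemma moyal_apply_eq_integral_fourierDot (Θ : Matrix (Fin n) (Fin n) ℝ) (f g : (Fin n → ℝ) → ℂ)
    (x : Fin n → ℝ) :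
    moyal n Θ f g x = (((2 * π) ^ n : ℝ) : ℂ)⁻¹ * ∫ ξ,
      cexp (I * (ξ ⬝ᵥ x : ℝ)) * f (x - (1 / 2 : ℝ) • Θ.mulVec ξ) * fourierDot g (-ξ) := by
  simp only [moyal, fourierDot]
  congr 2 with ξ
  rw [← integral_const_mul]
  congr 1 with y
  change cexp (I * (ξ ⬝ᵥ (x - y) : ℝ)) * _ * _ = _
  rw [dotProduct_sub, sub_eq_add_neg, ← neg_dotProduct, ofReal_add, mul_add, Complex.exp_add]
  ring

lemma integral_exp_dotProduct_mul_comp_sub (f : (Fin n → ℝ) → ℂ) (ξ a : Fin n → ℝ) :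
    ∫ x, cexp (I * (ξ ⬝ᵥ x : ℝ)) * f (x - a) = cexp (I * (ξ ⬝ᵥ a : ℝ)) * fourierDot f ξ := by
  rw [fourierDot, ← integral_const_mul,
    ← integral_add_right_eq_self (fun x => cexp (I * (ξ ⬝ᵥ x : ℝ)) * f (x - a)) a]
  congr 1 with x
  rw [add_sub_cancel_right, dotProduct_add, ofReal_add, mul_add, Complex.exp_add]
  ring

noncomputable def SchwartzMap.toEuclidean (f : 𝓢(Fin n → ℝ, ℂ)) :
    𝓢(EuclideanSpace ℝ (Fin n), ℂ) :=
  SchwartzMap.compCLMOfContinuousLinearEquiv ℂ (EuclideanSpace.equiv (Fin n) ℝ) f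

lemma fourierDot_eq_fourierInv_toEuclidean (f : 𝓢(Fin n → ℝ, ℂ)) (ξ : Fin n → ℝ) :
    fourierDot f ξ = 𝓕⁻ f.toEuclidean ((2 * π)⁻¹ • WithLp.toLp 2 ξ) := by
  rw [fourierDot_eq_fourierInv, SchwartzMap.fourierInv_coe]
  rfl

lemma integrable_fourierDot (f : 𝓢(Fin n → ℝ, ℂ)) : Integrable (fourierDot f) := by
  have hc : (2 * π)⁻¹ ≠ 0 := by positivity
  have := ((PiLp.volume_preserving_toLp (Fin n)).integrable_comp_of_integrable
    (𝓕⁻ f.toEuclidean).integrable).comp_smul hc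
  refine this.congr (ae_of_all _ fun ξ => ?_)
  rw [fourierDot_eq_fourierInv_toEuclidean, ← WithLp.toLp_smul]
  rfl

lemma integral_fourierDot_mul_fourierDot_neg (f g : 𝓢(Fin n → ℝ, ℂ)) :
    ∫ ξ, fourierDot f ξ * fourierDot g (-ξ) = ((2 * π) ^ n : ℝ) * ∫ x, f x * g x := by
  set h : EuclideanSpace ℝ (Fin n) → ℂ := fun w => 𝓕⁻ f.toEuclidean w * 𝓕 g.toEuclidean w
  have hξ (ξ : Fin n → ℝ) :
      fourierDot f ξ * fourierDot g (-ξ) = h ((2 * π)⁻¹ • WithLp.toLp 2 ξ) := by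
    rw [fourierDot_eq_fourierInv_toEuclidean, fourierDot_eq_fourierInv_toEuclidean,
      SchwartzMap.fourierInv_coe g.toEuclidean, Real.fourierInv_eq_fourier_neg, WithLp.toLp_neg,
      smul_neg, neg_neg]
    rfl
  calc ∫ ξ, fourierDot f ξ * fourierDot g (-ξ)
      = ∫ w, h ((2 * π)⁻¹ • w) := by
        simp_rw [hξ]
        exact (PiLp.volume_preserving_toLp (Fin n)).integral_comp
          (MeasurableEquiv.toLp 2 (Fin n → ℝ)).measurableEmbedding (fun w => h ((2 * π)⁻¹ • w))
    _ = ((2 * π) ^ n : ℝ) * ∫ w, f.toEuclidean w * g.toEuclidean w := by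
        rw [Measure.integral_comp_inv_smul, finrank_euclideanSpace_fin,
          abs_of_pos (by positivity), real_smul, SchwartzMap.integral_fourierInv_mul_eq,
          FourierPair.fourierInv_fourier_eq]
    _ = ((2 * π) ^ n : ℝ) * ∫ x, f x * g x := by
        rw [← (PiLp.volume_preserving_ofLp (Fin n)).integral_comp
          (MeasurableEquiv.toLp 2 (Fin n → ℝ)).symm.measurableEmbedding]
        rfl

lemma integrable_mul_comp_sub_prod {V W L : Type*} [MeasurableSpace V] [AddGroup V]
    [MeasurableAdd V] [MeasurableSub₂ V] [MeasurableSpace W] [NormedRing L]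
    {μ : Measure V} [SFinite μ] [μ.IsAddRightInvariant] {ν : Measure W} [SFinite ν]
    {ψ : W → L} {φ : V → L} (hψ : Integrable ψ ν) (hφ : Integrable φ μ) {A : W → V}
    (hA : Measurable A) :
    Integrable (fun p : W × V => ψ p.1 * φ (p.2 - A p.1)) (ν.prod μ) := by
  have hshear : MeasurePreserving (fun p : W × V => (p.1, p.2 - A p.1)) (ν.prod μ) (ν.prod μ) :=
    (MeasurePreserving.id ν).skew_product (measurable_snd.sub (hA.comp measurable_fst))
      (ae_of_all _ fun ξ => (measurePreserving_sub_right μ (A ξ)).map_eq)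
  have hprod := hψ.mul_prod hφ
  exact (hshear.integrable_comp hprod.aestronglyMeasurable).mpr hprod

lemma integrable_moyal_integrand (Θ : Matrix (Fin n) (Fin n) ℝ) (f g : 𝓢(Fin n → ℝ, ℂ)) :
    Integrable (fun p : (Fin n → ℝ) × (Fin n → ℝ) =>
      cexp (I * (p.1 ⬝ᵥ p.2 : ℝ)) * f (p.2 - (1 / 2 : ℝ) • Θ.mulVec p.1) * fourierDot g (-p.1))
      (volume.prod volume) := by
  have hprod := integrable_mul_comp_sub_prod (integrable_fourierDot g).comp_neg
    (f.integrable (μ := volume)) (A := fun ξ => (1 / 2 : ℝ) • Θ.mulVec ξ) (by fun_prop)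
  have hphase : Continuous fun p : (Fin n → ℝ) × (Fin n → ℝ) => cexp (I * (p.1 ⬝ᵥ p.2 : ℝ)) := by
    fun_prop
  refine (hprod.bdd_mul (c := 1) hphase.aestronglyMeasurable
    (ae_of_all _ fun p => (norm_exp_I_mul_ofReal _).le)).congr (ae_of_all _ fun p => ?_)
  ring

end

/-- The integral of the Moyal product of two Schwartz functions equals the integral
of their pointwise product. -/
theorem integral_moyal_eq_integral_mul (n : ℕ) (Θ : Matrix (Fin n) (Fin n) ℝ)
    (hΘ : Θ.transpose = -Θ) (f g : SchwartzMap (Fin n → ℝ) ℂ) :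
    ∫ x : Fin n → ℝ, moyal n Θ (fun y => f y) (fun y => g y) x
      = ∫ x : Fin n → ℝ, f x * g x := by
  have h2π : (((2 * π) ^ n : ℝ) : ℂ) ≠ 0 := ofReal_ne_zero.mpr (by positivity)
  calc ∫ x, moyal n Θ (fun y => f y) (fun y => g y) x
      = (((2 * π) ^ n : ℝ) : ℂ)⁻¹ * ∫ x, ∫ ξ,
          cexp (I * (ξ ⬝ᵥ x : ℝ)) * f (x - (1 / 2 : ℝ) • Θ.mulVec ξ) * fourierDot g (-ξ) := by
        simp_rw [moyal_apply_eq_integral_fourierDot]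
        exact integral_const_mul _ _
    _ = (((2 * π) ^ n : ℝ) : ℂ)⁻¹ * ∫ ξ, ∫ x,
          cexp (I * (ξ ⬝ᵥ x : ℝ)) * f (x - (1 / 2 : ℝ) • Θ.mulVec ξ) * fourierDot g (-ξ) := by
        rw [← integral_integral_swap (integrable_moyal_integrand Θ f g)]
    _ = (((2 * π) ^ n : ℝ) : ℂ)⁻¹ * ∫ ξ, fourierDot f ξ * fourierDot g (-ξ) := by
        congr 2 with ξ
        rw [integral_mul_const, integral_exp_dotProduct_mul_comp_sub, dotProduct_smul,
          dotProduct_mulVec_self_eq_zero_of_transpose_eq_neg hΘ, smul_zero, ofReal_zero, mul_zero,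
          Complex.exp_zero, one_mul]
    _ = ∫ x, f x * g x := by
        rw [integral_fourierDot_mul_fourierDot_neg, inv_mul_cancel_left₀ h2π]
end

section
/- The leading term of the heat trace for the flat Laplacian with Moyal regularization: for f ∈ S(ℝⁿ) and t > 0, the operator L^Θ(f) e^{tΔ} (Δ = ∑_μ ∂_μ² the flat Laplacian on L²(ℝⁿ)) is trace class and Tr(L^Θ(f) e^{tΔ}) = (4πt)^{-n/2} ∫_{ℝⁿ} f(x) dx. -/
open MeasureTheory Complex

/-- The heat semigroup `e^{tΔ}` of the flat Laplacian, given by its Gaussian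
kernel `(4πt)^{-n/2} e^{-|x-y|²/(4t)}`. -/
noncomputable def flatHeat (n : ℕ) (t : ℝ) (ψ : (Fin n → ℝ) → ℂ) :
    (Fin n → ℝ) → ℂ :=
  fun x => ∫ y : Fin n → ℝ,
    ((((4 * Real.pi * t) ^ ((n : ℝ) / 2))⁻¹ : ℝ) : ℂ) *
      ((Real.exp (-(∑ i, (x i - y i) ^ 2) / (4 * t)) : ℝ) : ℂ) * ψ y

/-- The Schwartz kernel of the regularized heat operator `L^Θ(f) e^{tΔ}`. -/
noncomputable def moyalHeatKernel (n : ℕ) (Θ : Matrix (Fin n) (Fin n) ℝ)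
    (f : (Fin n → ℝ) → ℂ) (t : ℝ) : (Fin n → ℝ) → (Fin n → ℝ) → ℂ :=
  fun x y => (((2 * Real.pi) ^ n : ℝ) : ℂ)⁻¹ *
    ∫ ξ : Fin n → ℝ,
      Complex.exp (Complex.I * (∑ i, ξ i * (x i - y i))) *
        f (x - (1 / 2 : ℝ) • Θ.mulVec ξ) *
        ((Real.exp (-t * ∑ i, ξ i ^ 2) : ℝ) : ℂ)

/-! The Fourier transform of the normalized heat kernel is `e^{-t|ξ|²}`, so after two uses of
Fubini the kernel of `L^Θ(f) e^{tΔ}` is the `ξ`-integral in `moyalHeatKernel`. On the diagonal the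
phase is `1`, and the shear `(ξ, x) ↦ (ξ, x - ½Θξ)` preserves Lebesgue measure on `ℝⁿ × ℝⁿ`; this
makes the diagonal integrable and, by translation invariance in `x`, gives
`∫ K(x,x) dx = (2π)^{-n} (π/t)^{n/2} ∫ f = (4πt)^{-n/2} ∫ f`. -/

theorem Integrable.mul_prod_comp_sub {F E L : Type*} [MeasurableSpace F] [MeasurableSpace E]
    [AddGroup E] [MeasurableAdd₂ E] [MeasurableNeg E] [NormedRing L]
    {ν : Measure F} {μ : Measure E} [SFinite ν] [SFinite μ] [μ.IsAddRightInvariant]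
    {g : F → L} {f : E → L} {A : F → E} (hg : Integrable g ν) (hf : Integrable f μ)
    (hA : Measurable A) :
    Integrable (fun p : F × E => g p.1 * f (p.2 - A p.1)) (ν.prod μ) := by
  have shear : MeasurePreserving (fun p : F × E => (p.1, p.2 - A p.1)) (ν.prod μ) (ν.prod μ) :=
    (MeasurePreserving.id ν).skew_product (measurable_snd.sub (hA.comp measurable_fst))
      (.of_forall fun ξ => (measurePreserving_sub_right μ (A ξ)).map_eq)
  exact shear.integrable_comp_of_integrable (hg.mul_prod hf)

section Gaussian

variable {ι : Type*} [Fintype ι]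

theorem integrable_rexp_neg_mul_sum_sq {s : ℝ} (hs : 0 < s) :
    Integrable (fun ξ : ι → ℝ => Real.exp (-s * ∑ i, ξ i ^ 2)) := by
  simp_rw [Finset.mul_sum, Real.exp_sum]
  exact Integrable.fintype_prod (f := fun _ u => Real.exp (-s * u ^ 2))
    fun _ => integrable_exp_neg_mul_sq hs

theorem integral_rexp_neg_mul_sum_sq (s : ℝ) :
    ∫ ξ : ι → ℝ, Real.exp (-s * ∑ i, ξ i ^ 2) = √(Real.pi / s) ^ Fintype.card ι := by
  simp_rw [Finset.mul_sum, Real.exp_sum]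
  rw [integral_fintype_prod_volume_eq_pow (fun u => Real.exp (-s * u ^ 2)), integral_gaussian]

theorem integral_cexp_I_mul_sum_mul_heatKernel {t : ℝ} (ht : 0 < t) (ξ x z : ι → ℝ) :
    ∫ y : ι → ℝ, cexp (I * ↑(∑ i, ξ i * (x i - y i))) *
        (((((4 * Real.pi * t) ^ ((Fintype.card ι : ℝ) / 2))⁻¹ : ℝ) : ℂ) *
          ↑(Real.exp (-(∑ i, (y i - z i) ^ 2) / (4 * t))))
      = cexp (I * ↑(∑ i, ξ i * (x i - z i))) * ↑(Real.exp (-t * ∑ i, ξ i ^ 2)) := by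
  have ht' : (t : ℂ) ≠ 0 := ofReal_ne_zero.mpr ht.ne'
  have hb : 0 < (1 / (4 * t : ℂ)).re := by
    rw [show (1 / (4 * t : ℂ)) = ((1 / (4 * t) : ℝ) : ℂ) by push_cast; ring, ofReal_re]
    positivity
  have hshift : ∀ v : ι → ℝ, cexp (I * ↑(∑ i, ξ i * (x i - (v + z) i))) *
        ↑(Real.exp (-(∑ i, ((v + z) i - z i) ^ 2) / (4 * t)))
      = cexp (I * ↑(∑ i, ξ i * (x i - z i))) *
          cexp (-(1 / (4 * t)) * ∑ i, (v i : ℂ) ^ 2 + ∑ i, (-I * ξ i) * v i) := by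
    intro v
    rw [ofReal_exp, ← exp_add, ← exp_add]
    congr 1
    simp only [Pi.add_apply, add_sub_cancel_right]
    push_cast
    simp only [Finset.mul_sum, Finset.sum_div, neg_div, ← Finset.sum_neg_distrib,
      ← Finset.sum_add_distrib]
    exact Finset.sum_congr rfl fun i _ => by field_simp; ring
  have hconst : ((Real.pi : ℂ) / (1 / (4 * t))) ^ ((Fintype.card ι : ℂ) / 2)
      = ↑((4 * Real.pi * t) ^ ((Fintype.card ι : ℝ) / 2)) := by
    rw [ofReal_cpow (by positivity)]
    push_cast
    congr 1
    field_simp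
  have hnorm : ((((4 * Real.pi * t) ^ ((Fintype.card ι : ℝ) / 2))⁻¹ : ℝ) : ℂ) *
      ↑((4 * Real.pi * t) ^ ((Fintype.card ι : ℝ) / 2)) = 1 := by
    rw [← ofReal_mul, inv_mul_cancel₀ (by positivity), ofReal_one]
  have hexp : (∑ i, (-I * ξ i) ^ 2) / (4 * (1 / (4 * t))) = ((-t * ∑ i, ξ i ^ 2 : ℝ) : ℂ) := by
    push_cast
    simp only [Finset.mul_sum, Finset.sum_div]
    exact Finset.sum_congr rfl fun i _ => by field_simp; linear_combination (ξ i ^ 2 : ℂ) * I_sq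
  simp_rw [mul_left_comm (cexp _)]
  rw [integral_const_mul, ← integral_add_right_eq_self _ z]
  simp_rw [hshift]
  rw [integral_const_mul, GaussianFourier.integral_cexp_neg_mul_sum_add hb, hconst, hexp,
    ← ofReal_exp]
  linear_combination
    (cexp (I * ↑(∑ i, ξ i * (x i - z i))) * ↑(Real.exp (-t * ∑ i, ξ i ^ 2))) * hnorm

end Gaussian

section MoyalHeat

variable {n : ℕ}

theorem integral_cexp_I_mul_sum_mul_flatHeat {t : ℝ} (ht : 0 < t) {ψ : (Fin n → ℝ) → ℂ}
    (hψ : Integrable ψ) (ξ x : Fin n → ℝ) :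
    ∫ y : Fin n → ℝ, cexp (I * ↑(∑ i, ξ i * (x i - y i))) * flatHeat n t ψ y
      = ↑(Real.exp (-t * ∑ i, ξ i ^ 2)) *
          ∫ z : Fin n → ℝ, cexp (I * ↑(∑ i, ξ i * (x i - z i))) * ψ z := by
  have hgauss : Integrable fun w : Fin n → ℝ =>
      ((((4 * Real.pi * t) ^ ((n : ℝ) / 2))⁻¹ : ℝ) : ℂ) *
        ↑(Real.exp (-(∑ i, w i ^ 2) / (4 * t))) := by
    have h := (integrable_rexp_neg_mul_sum_sq (ι := Fin n) (s := 1 / (4 * t))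
      (by positivity)).ofReal (𝕜 := ℂ)
    refine (h.congr (.of_forall fun w => ?_)).const_mul _
    simp only
    congr 2
    ring
  have hprod : Integrable (Function.uncurry fun y z : Fin n → ℝ =>
      cexp (I * ↑(∑ i, ξ i * (x i - y i))) *
        (((((4 * Real.pi * t) ^ ((n : ℝ) / 2))⁻¹ : ℝ) : ℂ) *
          ↑(Real.exp (-(∑ i, (y i - z i) ^ 2) / (4 * t))) * ψ z)) (volume.prod volume) := by
    have h := hψ.convolution_integrand (ContinuousLinearMap.mul ℝ ℂ) hgauss
    refine (h.bdd_mul (c := 1) (by fun_prop : Continuous fun p : (Fin n → ℝ) × (Fin n → ℝ) =>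
        cexp (I * ↑(∑ i, ξ i * (x i - p.1 i)))).aestronglyMeasurable
      (.of_forall fun _ => (norm_exp_I_mul_ofReal _).le)).congr (.of_forall fun p => ?_)
    simp only [Function.uncurry, ContinuousLinearMap.mul_apply', Pi.sub_apply]
    ring
  calc ∫ y : Fin n → ℝ, cexp (I * ↑(∑ i, ξ i * (x i - y i))) * flatHeat n t ψ y
      = ∫ y : Fin n → ℝ, ∫ z : Fin n → ℝ, cexp (I * ↑(∑ i, ξ i * (x i - y i))) *
          (((((4 * Real.pi * t) ^ ((n : ℝ) / 2))⁻¹ : ℝ) : ℂ) *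
            ↑(Real.exp (-(∑ i, (y i - z i) ^ 2) / (4 * t))) * ψ z) := by
        simp only [flatHeat, ← integral_const_mul]
    _ = ∫ z : Fin n → ℝ, ∫ y : Fin n → ℝ, cexp (I * ↑(∑ i, ξ i * (x i - y i))) *
          (((((4 * Real.pi * t) ^ ((n : ℝ) / 2))⁻¹ : ℝ) : ℂ) *
            ↑(Real.exp (-(∑ i, (y i - z i) ^ 2) / (4 * t))) * ψ z) := by
        rw [integral_integral_swap hprod]
    _ = ∫ z : Fin n → ℝ, ψ z * ∫ y : Fin n → ℝ, cexp (I * ↑(∑ i, ξ i * (x i - y i))) *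
          (((((4 * Real.pi * t) ^ ((n : ℝ) / 2))⁻¹ : ℝ) : ℂ) *
            ↑(Real.exp (-(∑ i, (y i - z i) ^ 2) / (4 * t)))) := by
        simp_rw [← integral_const_mul]
        congr 1 with z
        congr 1 with y
        ring
    _ = ↑(Real.exp (-t * ∑ i, ξ i ^ 2)) *
          ∫ z : Fin n → ℝ, cexp (I * ↑(∑ i, ξ i * (x i - z i))) * ψ z := by
        have hfourier := integral_cexp_I_mul_sum_mul_heatKernel ht ξ x
        rw [Fintype.card_fin] at hfourier
        simp_rw [hfourier, ← integral_const_mul]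
        congr 1 with z
        ring

theorem moyal_flatHeat_eq_integral_moyalHeatKernel (Θ : Matrix (Fin n) (Fin n) ℝ)
    {f : (Fin n → ℝ) → ℂ} (hf : Continuous f) {C : ℝ} (hfC : ∀ v, ‖f v‖ ≤ C)
    {t : ℝ} (ht : 0 < t) {ψ : (Fin n → ℝ) → ℂ} (hψ : Integrable ψ) (x : Fin n → ℝ) :
    moyal n Θ f (flatHeat n t ψ) x = ∫ y, moyalHeatKernel n Θ f t x y * ψ y := by
  have hprod : Integrable (Function.uncurry fun ξ z : Fin n → ℝ =>
      cexp (I * ↑(∑ i, ξ i * (x i - z i))) *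
        (f (x - (1 / 2 : ℝ) • Θ.mulVec ξ) * (↑(Real.exp (-t * ∑ i, ξ i ^ 2)) * ψ z)))
      (volume.prod volume) :=
    (((integrable_rexp_neg_mul_sum_sq ht).ofReal.mul_prod hψ).bdd_mul (c := C)
      (by fun_prop : Continuous fun p : (Fin n → ℝ) × (Fin n → ℝ) =>
        f (x - (1 / 2 : ℝ) • Θ.mulVec p.1)).aestronglyMeasurable
      (.of_forall fun _ => hfC _)).bdd_mul (c := 1)
      (by fun_prop : Continuous fun p : (Fin n → ℝ) × (Fin n → ℝ) =>
        cexp (I * ↑(∑ i, p.1 i * (x i - p.2 i)))).aestronglyMeasurable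
      (.of_forall fun _ => (norm_exp_I_mul_ofReal _).le)
  have hinner : ∀ ξ, ∫ y, cexp (I * ↑(∑ i, ξ i * (x i - y i))) *
        f (x - (1 / 2 : ℝ) • Θ.mulVec ξ) * flatHeat n t ψ y
      = ∫ z, cexp (I * ↑(∑ i, ξ i * (x i - z i))) *
        (f (x - (1 / 2 : ℝ) • Θ.mulVec ξ) * (↑(Real.exp (-t * ∑ i, ξ i ^ 2)) * ψ z)) := by
    intro ξ
    simp_rw [mul_right_comm _ (f _), integral_mul_const,
      integral_cexp_I_mul_sum_mul_flatHeat ht hψ, ← integral_const_mul, ← integral_mul_const]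
    congr! 2 with z
    ring
  calc moyal n Θ f (flatHeat n t ψ) x
      = (((2 * Real.pi) ^ n : ℝ) : ℂ)⁻¹ * ∫ ξ, ∫ z, cexp (I * ↑(∑ i, ξ i * (x i - z i))) *
          (f (x - (1 / 2 : ℝ) • Θ.mulVec ξ) * (↑(Real.exp (-t * ∑ i, ξ i ^ 2)) * ψ z)) := by
        simp_rw [moyal, hinner]
    _ = (((2 * Real.pi) ^ n : ℝ) : ℂ)⁻¹ * ∫ z, ∫ ξ, cexp (I * ↑(∑ i, ξ i * (x i - z i))) *
          (f (x - (1 / 2 : ℝ) • Θ.mulVec ξ) * (↑(Real.exp (-t * ∑ i, ξ i ^ 2)) * ψ z)) := by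
        rw [integral_integral_swap hprod]
    _ = ∫ y, moyalHeatKernel n Θ f t x y * ψ y := by
        simp_rw [moyalHeatKernel, mul_assoc _ _ (ψ _), ← integral_mul_const, ← integral_const_mul]
        congr! 4 with z ξ
        ring

theorem inv_two_pi_pow_mul_sqrt_pi_div_pow {t : ℝ} (ht : 0 < t) :
    ((2 * Real.pi) ^ n)⁻¹ * √(Real.pi / t) ^ n = ((4 * Real.pi * t) ^ ((n : ℝ) / 2))⁻¹ := by
  have hsq : √(4 * Real.pi * t) * √(Real.pi / t) = 2 * Real.pi := by
    rw [← Real.sqrt_mul (by positivity), show 4 * Real.pi * t * (Real.pi / t) = (2 * Real.pi) ^ 2 by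
      field_simp; ring, Real.sqrt_sq (by positivity)]
  have hpow : (4 * Real.pi * t) ^ ((n : ℝ) / 2) = √(4 * Real.pi * t) ^ n := by
    rw [Real.sqrt_eq_rpow, ← Real.rpow_natCast, ← Real.rpow_mul (by positivity)]
    ring_nf
  have hpos : 0 < √(Real.pi / t) ^ n := by positivity
  rw [hpow, ← hsq, mul_pow, mul_inv, mul_assoc, inv_mul_cancel₀ hpos.ne', mul_one]

theorem moyalHeatKernel_self (Θ : Matrix (Fin n) (Fin n) ℝ) (f : (Fin n → ℝ) → ℂ) (t : ℝ)
    (x : Fin n → ℝ) :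
    moyalHeatKernel n Θ f t x x = (((2 * Real.pi) ^ n : ℝ) : ℂ)⁻¹ *
      ∫ ξ, ↑(Real.exp (-t * ∑ i, ξ i ^ 2)) * f (x - (1 / 2 : ℝ) • Θ.mulVec ξ) := by
  simp only [moyalHeatKernel, sub_self, mul_zero, Finset.sum_const_zero, ofReal_zero, exp_zero,
    one_mul, mul_comm (f _)]

theorem integrable_gaussian_mul_comp_sub_mulVec (Θ : Matrix (Fin n) (Fin n) ℝ)
    {f : (Fin n → ℝ) → ℂ} (hf : Integrable f) {t : ℝ} (ht : 0 < t) :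
    Integrable (Function.uncurry fun ξ x : Fin n → ℝ =>
      ↑(Real.exp (-t * ∑ i, ξ i ^ 2)) * f (x - (1 / 2 : ℝ) • Θ.mulVec ξ))
      (volume.prod volume) :=
  Integrable.mul_prod_comp_sub (A := fun ξ => (1 / 2 : ℝ) • Θ.mulVec ξ)
    (integrable_rexp_neg_mul_sum_sq ht).ofReal hf (by fun_prop)

theorem integrable_moyalHeatKernel_self (Θ : Matrix (Fin n) (Fin n) ℝ)
    {f : (Fin n → ℝ) → ℂ} (hf : Integrable f) {t : ℝ} (ht : 0 < t) :
    Integrable fun x => moyalHeatKernel n Θ f t x x := by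
  simp_rw [moyalHeatKernel_self]
  exact (integrable_gaussian_mul_comp_sub_mulVec Θ hf ht).integral_prod_right.const_mul _

theorem integral_moyalHeatKernel_self (Θ : Matrix (Fin n) (Fin n) ℝ)
    {f : (Fin n → ℝ) → ℂ} (hf : Integrable f) {t : ℝ} (ht : 0 < t) :
    ∫ x, moyalHeatKernel n Θ f t x x
      = ((((4 * Real.pi * t) ^ ((n : ℝ) / 2))⁻¹ : ℝ) : ℂ) * ∫ x, f x := by
  calc ∫ x, moyalHeatKernel n Θ f t x x
      = (((2 * Real.pi) ^ n : ℝ) : ℂ)⁻¹ * ∫ ξ : Fin n → ℝ, ∫ x : Fin n → ℝ,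
          ↑(Real.exp (-t * ∑ i, ξ i ^ 2)) * f (x - (1 / 2 : ℝ) • Θ.mulVec ξ) := by
        simp_rw [moyalHeatKernel_self]
        rw [integral_const_mul,
          integral_integral_swap (integrable_gaussian_mul_comp_sub_mulVec Θ hf ht)]
    _ = ↑(((2 * Real.pi) ^ n)⁻¹ * √(Real.pi / t) ^ n) * ∫ x, f x := by
        simp_rw [integral_const_mul, integral_sub_right_eq_self, integral_mul_const,
          integral_complex_ofReal, integral_rexp_neg_mul_sum_sq, Fintype.card_fin]
        push_cast
        ring
    _ = ((((4 * Real.pi * t) ^ ((n : ℝ) / 2))⁻¹ : ℝ) : ℂ) * ∫ x, f x := by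
        rw [inv_two_pi_pow_mul_sqrt_pi_div_pow ht]

end MoyalHeat

theorem trace_moyal_heat_general (n : ℕ) (Θ : Matrix (Fin n) (Fin n) ℝ)
    (f : SchwartzMap (Fin n → ℝ) ℂ) (t : ℝ) (ht : 0 < t) :
    (∀ ψ : SchwartzMap (Fin n → ℝ) ℂ, ∀ x : Fin n → ℝ,
        moyal n Θ (fun y => f y) (flatHeat n t (fun y => ψ y)) x
          = ∫ y : Fin n → ℝ, moyalHeatKernel n Θ (fun z => f z) t x y * ψ y)
      ∧ Integrable (fun x : Fin n → ℝ => moyalHeatKernel n Θ (fun z => f z) t x x)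
      ∧ ∫ x : Fin n → ℝ, moyalHeatKernel n Θ (fun z => f z) t x x
          = ((((4 * Real.pi * t) ^ ((n : ℝ) / 2))⁻¹ : ℝ) : ℂ) *
              ∫ x : Fin n → ℝ, f x :=
  ⟨fun ψ => moyal_flatHeat_eq_integral_moyalHeatKernel Θ f.continuous
      (SchwartzMap.norm_le_seminorm ℝ f) ht ψ.integrable,
    integrable_moyalHeatKernel_self Θ f.integrable ht,
    integral_moyalHeatKernel_self Θ f.integrable ht⟩

/-- For `f ∈ S(ℝⁿ)` and `t > 0`, the operator `L^Θ(f) e^{tΔ}` is trace class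
(its Schwartz kernel has integrable diagonal) and its trace is
`(4πt)^{-n/2} ∫ f`. -/
theorem trace_moyal_heat (n : ℕ) (Θ : Matrix (Fin n) (Fin n) ℝ)
    (hΘ : Θ.transpose = -Θ) (f : SchwartzMap (Fin n → ℝ) ℂ) (t : ℝ) (ht : 0 < t) :
    (∀ ψ : SchwartzMap (Fin n → ℝ) ℂ, ∀ x : Fin n → ℝ,
        moyal n Θ (fun y => f y) (flatHeat n t (fun y => ψ y)) x
          = ∫ y : Fin n → ℝ, moyalHeatKernel n Θ (fun z => f z) t x y * ψ y)
      ∧ Integrable (fun x : Fin n → ℝ => moyalHeatKernel n Θ (fun z => f z) t x x)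
      ∧ ∫ x : Fin n → ℝ, moyalHeatKernel n Θ (fun z => f z) t x x
          = ((((4 * Real.pi * t) ^ ((n : ℝ) / 2))⁻¹ : ℝ) : ℂ) *
              ∫ x : Fin n → ℝ, f x :=
  trace_moyal_heat_general n Θ f t ht
end
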